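/- arXiv:1407.2053 — 2 statements merged into one kernel-verified Lean document; each statement's English description precedes it below -/
import Mathlib

section
/- Let G be a split graph with vertex partition into a clique C(G) and a maximal independent set S(G), and let D be a minimal dominating set of G with D_C = D ∩ C(G) and D_S = D ∩ S(G). Then D_S = S(G) \ N_G(D_C). -/
open Set

variable {V : Type*}

/-- The closed neighbourhood `N_G[x]` of a vertex. -/
def closedNbhd (G : SimpleGraph V) (x : V) : Set V := insert x (G.neighborSet x)

/-- The closed neighbourhood `N_G[A]` of a set of vertices. -/
def closedNbhdSet (G : SimpleGraph V) (A : Set V) : Set V := ⋃ x ∈ A, closedNbhd G x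

/-- The open neighbourhood `N_G(A) = N_G[A] \ A` of a set of vertices. -/
def openNbhdSet (G : SimpleGraph V) (A : Set V) : Set V := closedNbhdSet G A \ A

/-- `D` is a dominating set of `G`. -/
def Dominates (G : SimpleGraph V) (D : Set V) : Prop := ∀ v, v ∈ closedNbhdSet G D

/-- `A` is an independent set of `G`. -/
def IsIndep (G : SimpleGraph V) (A : Set V) : Prop := A.Pairwise fun a b => ¬ G.Adj a b

/-- `(C, S)` is a split partition of `G`: `C` a clique, `S` an independent set,
together partitioning the vertex set. -/
def IsSplitPartition (G : SimpleGraph V) (C S : Set V) : Prop :=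
  C ∪ S = univ ∧ C ∩ S = ∅ ∧ G.IsClique C ∧ IsIndep G S

/-!
A vertex `v ∈ S` has all its neighbours in the clique `C`, so if `v` has a neighbour
`x ∈ C` then `N[v] ⊆ N[x]`. Hence a minimal dominating set containing `v` cannot also
contain such an `x`, which gives `D ∩ S ⊆ S \ N(D ∩ C)`. Conversely, a vertex of
`S \ N(D ∩ C)` can only be dominated by itself, since its other potential dominators lie in `C`.
-/

section Domination

variable {G : SimpleGraph V}

lemma mem_closedNbhdSet {A : Set V} {u : V} :
    u ∈ closedNbhdSet G A ↔ ∃ x ∈ A, u ∈ closedNbhd G x := by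
  simp [closedNbhdSet]

lemma Dominates.diff_singleton {D : Set V} {v x : V} (hD : Dominates G D) (hxD : x ∈ D)
    (hxv : x ≠ v) (hvx : closedNbhd G v ⊆ closedNbhd G x) : Dominates G (D \ {v}) := by
  intro u
  obtain ⟨d, hdD, hud⟩ := mem_closedNbhdSet.mp (hD u)
  rw [mem_closedNbhdSet]
  by_cases hdv : d = v
  · subst hdv
    exact ⟨x, ⟨hxD, hxv⟩, hvx hud⟩
  · exact ⟨d, ⟨hdD, hdv⟩, hud⟩

end Domination

namespace IsSplitPartition

variable {G : SimpleGraph V} {C S : Set V}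

lemma notMem_left {v : V} (hCS : IsSplitPartition G C S) (hv : v ∈ S) : v ∉ C :=
  fun hvC => (hCS.2.1 ▸ mem_inter hvC hv : v ∈ (∅ : Set V))

lemma mem_left_of_adj {u v : V} (hCS : IsSplitPartition G C S) (hv : v ∈ S)
    (huv : G.Adj u v) : u ∈ C := by
  rcases hCS.1.symm ▸ mem_univ u with huC | huS
  · exact huC
  · exact absurd huv (hCS.2.2.2 huS hv huv.ne)

lemma closedNbhd_subset {v x : V} (hCS : IsSplitPartition G C S) (hv : v ∈ S) (hx : x ∈ C)
    (hxv : G.Adj x v) : closedNbhd G v ⊆ closedNbhd G x := by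
  rintro u (rfl | hvu)
  · exact Or.inr hxv
  · by_cases hux : u = x
    · exact Or.inl hux
    · exact Or.inr (hCS.2.2.1 hx (hCS.mem_left_of_adj hv hvu.symm) (Ne.symm hux))

lemma notMem_closedNbhdSet_of_minimal {D : Set V} {v : V} (hCS : IsSplitPartition G C S)
    (hD : Minimal (Dominates G) D) (hvD : v ∈ D) (hv : v ∈ S) :
    v ∉ closedNbhdSet G (D ∩ C) := by
  rw [mem_closedNbhdSet]
  rintro ⟨x, ⟨hxD, hxC⟩, hvx⟩
  have hxv : x ≠ v := fun h => hCS.notMem_left hv (h ▸ hxC)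
  have hadj : G.Adj x v := hvx.resolve_left (Ne.symm hxv)
  have hdom := hD.1.diff_singleton hxD hxv (hCS.closedNbhd_subset hv hxC hadj)
  exact (hD.2 hdom sdiff_subset hvD).2 rfl

lemma mem_of_notMem_closedNbhdSet {D : Set V} {v : V} (hCS : IsSplitPartition G C S)
    (hD : Dominates G D) (hv : v ∈ S) (hvN : v ∉ closedNbhdSet G (D ∩ C)) : v ∈ D := by
  obtain ⟨d, hdD, rfl | hdv⟩ := mem_closedNbhdSet.mp (hD v)
  · exact hdD
  · exact (hvN <| mem_closedNbhdSet.mpr ⟨d, ⟨hdD, hCS.mem_left_of_adj hv hdv⟩, Or.inr hdv⟩).elim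

lemma mem_openNbhdSet_inter_iff {A : Set V} {v : V} (hCS : IsSplitPartition G C S)
    (hv : v ∈ S) : v ∈ openNbhdSet G (A ∩ C) ↔ v ∈ closedNbhdSet G (A ∩ C) :=
  and_iff_left fun hvAC => hCS.notMem_left hv hvAC.2

end IsSplitPartition

theorem stmt_9_general (G : SimpleGraph V) (C S : Set V)
    (hCS : IsSplitPartition G C S)
    (D : Set V) (hD : Minimal (Dominates G) D) :
    D ∩ S = S \ openNbhdSet G (D ∩ C) := by
  ext v
  refine ⟨fun ⟨hvD, hv⟩ => ⟨hv, ?_⟩, fun ⟨hv, hvN⟩ => ⟨?_, hv⟩⟩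
  · rw [hCS.mem_openNbhdSet_inter_iff hv]
    exact hCS.notMem_closedNbhdSet_of_minimal hD hvD hv
  · rw [hCS.mem_openNbhdSet_inter_iff hv] at hvN
    exact hCS.mem_of_notMem_closedNbhdSet hD.1 hv hvN

/-- In a split graph, a minimal dominating set `D` satisfies `D ∩ S = S \ N_G(D ∩ C)`. -/
theorem stmt_9 [Fintype V] (G : SimpleGraph V) (C S : Set V)
    (hCS : IsSplitPartition G C S) (hSmax : Maximal (IsIndep G) S)
    (D : Set V) (hD : Minimal (Dominates G) D) :
    D ∩ S = S \ openNbhdSet G (D ∩ C) :=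
  stmt_9_general G C S hCS D hD
end

section
/- Let G be a split graph with clique C(G) and maximal independent set S(G), and let A ⊆ C(G) be such that every vertex of A has a private neighbour with respect to the set A ∪ (S(G) \ N_G(A)). Then A ∪ (S(G) \ N_G(A)) is a minimal dominating set of G. -/
open Set

variable {V : Type*}

/-!
Every vertex of `D = A ∪ (S \ N(A))` has a private neighbour: those of `A` by hypothesis, and
a vertex `x ∈ S \ N(A)` is its own, since its only possible neighbours in `D` lie in `A` (excluded
as `x ∉ N(A)`) or in the independent set `S`. A dominating set all of whose vertices have private
neighbours is minimal. `D` dominates because `A` dominates the clique `C` as soon as `A ≠ ∅`, and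
`S` dominates `C` by maximality when `A = ∅`, while `D` contains every vertex of `S` outside `N(A)`.
-/

def privateNbhd (G : SimpleGraph V) (D : Set V) (x : V) : Set V :=
  closedNbhd G x \ closedNbhdSet G (D \ {x})

section Neighbourhoods

variable {G : SimpleGraph V}

lemma mem_closedNbhd_iff {y v : V} : v ∈ closedNbhd G y ↔ v = y ∨ G.Adj y v := by
  simp [closedNbhd, SimpleGraph.mem_neighborSet]

lemma mem_closedNbhdSet_iff {D : Set V} {v : V} :
    v ∈ closedNbhdSet G D ↔ ∃ y ∈ D, v = y ∨ G.Adj y v := by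
  simp [closedNbhdSet, mem_closedNbhd_iff]

lemma subset_closedNbhdSet (D : Set V) : D ⊆ closedNbhdSet G D :=
  fun v hv => mem_closedNbhdSet_iff.mpr ⟨v, hv, Or.inl rfl⟩

lemma closedNbhdSet_mono {A B : Set V} (h : A ⊆ B) : closedNbhdSet G A ⊆ closedNbhdSet G B :=
  biUnion_subset_biUnion_left h

@[simp]
lemma openNbhdSet_empty : openNbhdSet G ∅ = ∅ := by
  simp [openNbhdSet, closedNbhdSet]

lemma exists_adj_of_maximal_isIndep {S : Set V} (hS : Maximal (IsIndep G) S) {v : V}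
    (hv : v ∉ S) : ∃ s ∈ S, G.Adj s v := by
  by_contra! hno
  have hins : IsIndep G (insert v S) :=
    hS.1.insert fun s hs _ => ⟨fun h => hno s hs h.symm, hno s hs⟩
  exact hv (hS.2 hins (subset_insert v S) (mem_insert v S))

lemma minimal_dominates_of_forall_privateNbhd_nonempty {D : Set V} (hD : Dominates G D)
    (hpriv : ∀ x ∈ D, (privateNbhd G D x).Nonempty) : Minimal (Dominates G) D := by
  refine ⟨hD, fun D' hD' hsub x hx => ?_⟩
  by_contra hxD'
  obtain ⟨w, hw, hw_not⟩ := hpriv x hx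
  exact hw_not (closedNbhdSet_mono (subset_sdiff_singleton hsub hxD') (hD' w))

end Neighbourhoods

section SplitGraph

variable {G : SimpleGraph V} {C S A : Set V}

lemma IsSplitPartition.not_mem_of_mem_clique (hCS : IsSplitPartition G C S) {v : V}
    (hv : v ∈ C) : v ∉ S :=
  fun hs => (hCS.2.1 ▸ mem_inter hv hs : v ∈ (∅ : Set V))

lemma IsSplitPartition.dominates_union_sdiff_openNbhdSet (hCS : IsSplitPartition G C S)
    (hSmax : Maximal (IsIndep G) S) (hA : A ⊆ C) :
    Dominates G (A ∪ (S \ openNbhdSet G A)) := by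
  intro v
  rcases (hCS.1.symm ▸ mem_univ v : v ∈ C ∪ S) with hvC | hvS
  · by_cases hvA : v ∈ A
    · exact subset_closedNbhdSet _ (Or.inl hvA)
    rcases A.eq_empty_or_nonempty with rfl | ⟨a, haA⟩
    · obtain ⟨s, hs, hadj⟩ := exists_adj_of_maximal_isIndep hSmax (hCS.not_mem_of_mem_clique hvC)
      exact mem_closedNbhdSet_iff.mpr ⟨s, Or.inr (by simpa using hs), Or.inr hadj⟩
    · have hva : a ≠ v := fun h => hvA (h ▸ haA)
      exact mem_closedNbhdSet_iff.mpr ⟨a, Or.inl haA, Or.inr (hCS.2.2.1 (hA haA) hvC hva)⟩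
  · by_cases hvN : v ∈ openNbhdSet G A
    · exact closedNbhdSet_mono subset_union_left hvN.1
    · exact subset_closedNbhdSet _ (Or.inr ⟨hvS, hvN⟩)

lemma IsSplitPartition.self_mem_privateNbhd (hCS : IsSplitPartition G C S) (hA : A ⊆ C)
    {x : V} (hx : x ∈ S \ openNbhdSet G A) :
    x ∈ privateNbhd G (A ∪ (S \ openNbhdSet G A)) x := by
  refine ⟨mem_closedNbhd_iff.mpr (Or.inl rfl), fun hmem => ?_⟩
  obtain ⟨y, ⟨hyD, hyx⟩, hy⟩ := mem_closedNbhdSet_iff.mp hmem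
  have hadj : G.Adj y x := hy.resolve_left fun h => hyx (h ▸ rfl)
  rcases hyD with hyA | ⟨hyS, -⟩
  · exact hx.2 ⟨mem_closedNbhdSet_iff.mpr ⟨y, hyA, Or.inr hadj⟩,
      fun hxA => hCS.not_mem_of_mem_clique (hA hxA) hx.1⟩
  · exact hCS.2.2.2 hyS hx.1 hadj.ne hadj

end SplitGraph

theorem stmt_10_general (G : SimpleGraph V) (C S : Set V)
    (hCS : IsSplitPartition G C S) (hSmax : Maximal (IsIndep G) S)
    (A : Set V) (hA : A ⊆ C)
    (hpriv : ∀ x ∈ A,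
      (closedNbhd G x \
        closedNbhdSet G ((A ∪ (S \ openNbhdSet G A)) \ {x})).Nonempty) :
    Minimal (Dominates G) (A ∪ (S \ openNbhdSet G A)) := by
  refine minimal_dominates_of_forall_privateNbhd_nonempty
    (hCS.dominates_union_sdiff_openNbhdSet hSmax hA) fun x hx => ?_
  rcases hx with hxA | hxS
  · exact hpriv x hxA
  · exact ⟨x, hCS.self_mem_privateNbhd hA hxS⟩

/-- In a split graph, if `A ⊆ C` and every vertex of `A` has a private neighbour with
respect to `A ∪ (S \ N_G(A))`, then `A ∪ (S \ N_G(A))` is a minimal dominating set. -/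
theorem stmt_10 [Fintype V] (G : SimpleGraph V) (C S : Set V)
    (hCS : IsSplitPartition G C S) (hSmax : Maximal (IsIndep G) S)
    (A : Set V) (hA : A ⊆ C)
    (hpriv : ∀ x ∈ A,
      (closedNbhd G x \
        closedNbhdSet G ((A ∪ (S \ openNbhdSet G A)) \ {x})).Nonempty) :
    Minimal (Dominates G) (A ∪ (S \ openNbhdSet G A)) :=
  stmt_10_general G C S hCS hSmax A hA hpriv
end
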